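/- arXiv:1901.10035 — 3 statements merged into one kernel-verified Lean document; each statement's English description precedes it below -/
import Mathlib

section
/- With the 1D discrete weak derivative d_w as above with r ≥ 0: if w = (w₀, α, β) with w₀ ∈ P_k([0,1]), α = w₀(0), β = w₀(1), k ≤ r+1, and d_w w = 0, then w₀ is constant on [0,1]. -/
open MeasureTheory intervalIntegral Polynomial

/-!
Test the identity against `φ = w₀'`, which has degree at most `k - 1 ≤ r`. Integrating by parts,
the boundary terms cancel and what is left is `∫₀¹ (w₀')² = 0`. A polynomial whose square has zero
integral over a nondegenerate interval vanishes there, hence identically, so `w₀' = 0`.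
-/

namespace Polynomial

theorem integral_eval_mul_eval_derivative (p q : ℝ[X]) (a b : ℝ) :
    ∫ x in a..b, p.eval x * (derivative q).eval x =
      p.eval b * q.eval b - p.eval a * q.eval a -
        ∫ x in a..b, (derivative p).eval x * q.eval x :=
  integral_mul_deriv_eq_deriv_mul (fun x _ => p.hasDerivAt x) (fun x _ => q.hasDerivAt x)
    ((derivative p).continuous.intervalIntegrable a b)
    ((derivative q).continuous.intervalIntegrable a b)

theorem eq_zero_of_integral_eval_mul_self_eq_zero {p : ℝ[X]} {a b : ℝ} (hab : a < b)
    (h : ∫ x in a..b, p.eval x * p.eval x = 0) : p = 0 := by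
  have hcont : Continuous fun x => p.eval x * p.eval x := p.continuous.mul p.continuous
  have hae : (fun x => p.eval x * p.eval x) =ᵐ[volume.restrict (Set.Ioc a b)] 0 :=
    (integral_eq_zero_iff_of_le_of_nonneg_ae hab.le
      (Filter.Eventually.of_forall fun x => mul_self_nonneg _)
      (hcont.intervalIntegrable a b)).mp h
  have hIoo : Set.EqOn (fun x => p.eval x * p.eval x) 0 (Set.Ioo a b) :=
    Measure.eqOn_open_of_ae_eq (ae_restrict_of_ae_restrict_of_subset Set.Ioo_subset_Ioc_self hae)
      isOpen_Ioo hcont.continuousOn continuousOn_const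
  refine eq_zero_of_infinite_isRoot p ((Set.Ioo_infinite hab).mono fun x hx => ?_)
  exact mul_self_eq_zero.mp (hIoo hx)

end Polynomial

theorem discrete_weak_derivative_kernel_constant
    (r k : ℕ) (hrk : k ≤ r + 1) (w₀ : Polynomial ℝ) (hw : w₀.natDegree ≤ k)
    (hzero : ∀ φ : Polynomial ℝ, φ.natDegree ≤ r →
      (0 : ℝ) =
        -(∫ x in (0:ℝ)..1, w₀.eval x * (derivative φ).eval x)
          + w₀.eval 1 * φ.eval 1 - w₀.eval 0 * φ.eval 0) :
    ∃ cst : ℝ, w₀ = Polynomial.C cst := by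
  have hdeg : (derivative w₀).natDegree ≤ r := by
    have := natDegree_derivative_le w₀
    omega
  have hsq : ∫ x in (0:ℝ)..1, (derivative w₀).eval x * (derivative w₀).eval x = 0 := by
    have := hzero _ hdeg
    rw [integral_eval_mul_eval_derivative] at this
    linarith
  have hw' : derivative w₀ = 0 := eq_zero_of_integral_eval_mul_self_eq_zero zero_lt_one hsq
  exact ⟨_, eq_C_of_natDegree_eq_zero (derivative_eq_zero.mp hw')⟩
end

section
/- 1D commuting diagram property: let Q₀ denote L²(0,1)-orthogonal projection onto P_k([0,1]) and let q ∈ C¹([0,1]). Define the weak function Q_h q = (Q₀ q, q(0), q(1)) and its discrete weak derivative d_w(Q_h q) ∈ P_r([0,1]) by ∫₀¹ d_w(Q_h q)·φ = −∫₀¹ (Q₀q)·φ′ + q(1)φ(1) − q(0)φ(0) for all φ ∈ P_r([0,1]). If k ≥ r−1, then ∫₀¹ d_w(Q_h q)·φ = ∫₀¹ q′·φ for all φ ∈ P_r([0,1]). -/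
/-!
Since `r ≤ k + 1`, the derivative of a test polynomial `φ ∈ P_r` lies in `P_k`, so the projection
property lets us replace `Q₀ q` by `q` in `∫ (Q₀ q) φ'`; integrating `∫ q φ'` by parts then cancels
the boundary terms of the weak derivative and leaves `∫ q' φ`.
-/

open MeasureTheory intervalIntegral Polynomial

theorem integral_eval_mul_eq_of_orthogonal {a b : ℝ} {k : ℕ} {q : ℝ → ℝ}
    (hq : IntervalIntegrable q volume a b) {p : ℝ[X]}
    (hproj : ∀ φ : ℝ[X], φ.natDegree ≤ k → (∫ x in a..b, (q x - p.eval x) * φ.eval x) = 0)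
    {ψ : ℝ[X]} (hψ : ψ.natDegree ≤ k) :
    (∫ x in a..b, p.eval x * ψ.eval x) = ∫ x in a..b, q x * ψ.eval x := by
  have hqψ : IntervalIntegrable (fun x => q x * ψ.eval x) volume a b :=
    hq.mul_continuousOn ψ.continuous.continuousOn
  have hpψ : IntervalIntegrable (fun x => p.eval x * ψ.eval x) volume a b :=
    (p.continuous.mul ψ.continuous).intervalIntegrable a b
  have h := hproj ψ hψ
  simp only [sub_mul] at h
  rw [integral_sub hqψ hpψ] at h
  linarith

theorem integral_mul_eval_derivative {a b : ℝ} {q : ℝ → ℝ} (hq : ContDiff ℝ 1 q) (φ : ℝ[X]) :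
    (∫ x in a..b, q x * (derivative φ).eval x) =
      q b * φ.eval b - q a * φ.eval a - ∫ x in a..b, deriv q x * φ.eval x :=
  integral_mul_deriv_eq_deriv_mul (v := fun x => φ.eval x)
    (fun _ _ => (hq.differentiable one_ne_zero).differentiableAt.hasDerivAt)
    (fun x _ => φ.hasDerivAt x)
    ((hq.continuous_deriv le_rfl).intervalIntegrable a b)
    ((derivative φ).continuous.intervalIntegrable a b)

theorem commuting_diagram_1d_general
    (r k : ℕ) (hkr : r ≤ k + 1) (q : ℝ → ℝ) (hq : ContDiff ℝ 1 q)
    (p : Polynomial ℝ)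
    (hproj : ∀ φ : Polynomial ℝ, φ.natDegree ≤ k →
      (∫ x in (0:ℝ)..1, (q x - p.eval x) * φ.eval x) = 0)
    (d : Polynomial ℝ)
    (hdef : ∀ φ : Polynomial ℝ, φ.natDegree ≤ r →
      (∫ x in (0:ℝ)..1, d.eval x * φ.eval x) =
        -(∫ x in (0:ℝ)..1, p.eval x * (derivative φ).eval x)
          + q 1 * φ.eval 1 - q 0 * φ.eval 0) :
    ∀ φ : Polynomial ℝ, φ.natDegree ≤ r →
      (∫ x in (0:ℝ)..1, d.eval x * φ.eval x) = ∫ x in (0:ℝ)..1, deriv q x * φ.eval x := by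
  intro φ hφ
  have hφ' : (derivative φ).natDegree ≤ k := (natDegree_derivative_le φ).trans (by omega)
  rw [hdef φ hφ, integral_eval_mul_eq_of_orthogonal (hq.continuous.intervalIntegrable 0 1) hproj hφ',
    integral_mul_eval_derivative hq]
  ring

theorem commuting_diagram_1d
    (r k : ℕ) (hkr : r ≤ k + 1) (q : ℝ → ℝ) (hq : ContDiff ℝ 1 q)
    (p : Polynomial ℝ) (hp : p.natDegree ≤ k)
    (hproj : ∀ φ : Polynomial ℝ, φ.natDegree ≤ k →
      (∫ x in (0:ℝ)..1, (q x - p.eval x) * φ.eval x) = 0)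
    (d : Polynomial ℝ) (hd : d.natDegree ≤ r)
    (hdef : ∀ φ : Polynomial ℝ, φ.natDegree ≤ r →
      (∫ x in (0:ℝ)..1, d.eval x * φ.eval x) =
        -(∫ x in (0:ℝ)..1, p.eval x * (derivative φ).eval x)
          + q 1 * φ.eval 1 - q 0 * φ.eval 0) :
    ∀ φ : Polynomial ℝ, φ.natDegree ≤ r →
      (∫ x in (0:ℝ)..1, d.eval x * φ.eval x) = ∫ x in (0:ℝ)..1, deriv q x * φ.eval x :=
  commuting_diagram_1d_general r k hkr q hq p hproj d hdef
end

section
/- Non-equivalence of bilinear forms: let a(x,y) = 1+x on T = [0,1]², c = a⁻¹, and let Q_h denote L²(T)-projection onto constants. For constant vectors p, q ∈ ℝ², one has ∫_T a·(Q_h(c p))·(Q_h(c q)) dxdy = (3/2)(ln 2)² (p·q) while ∫_T c (p·q) dxdy = (ln 2)(p·q). Since (3/2)(ln 2)² ≠ ln 2, the two bilinear forms (p,q) ↦ ∫_T a (Q_h(cp))·(Q_h(cq)) and (p,q) ↦ ∫_T c p·q on ℝ² × ℝ² are not equal. -/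
open MeasureTheory intervalIntegral

lemma int_inv : (∫ x in (0:ℝ)..1, 1 / (1 + x)) = Real.log 2 := by
  have h : (∫ x in (0:ℝ)..1, 1 / (1 + x)) = ∫ x in (0:ℝ)..1, (fun u => 1/u) (x + 1) := by
    congr 1; ext x; ring_nf
  rw [h, intervalIntegral.integral_comp_add_right (fun u => 1/u) 1]
  simp only [zero_add]
  rw [integral_one_div (by norm_num : (0:ℝ) ∉ Set.uIcc 1 (1+1))]
  norm_num

lemma int_lin : (∫ x in (0:ℝ)..1, (1 + x)) = 3/2 := by
  have : (∫ x in (0:ℝ)..1, (1 + x)) = (∫ x in (0:ℝ)..1, (1:ℝ)) + ∫ x in (0:ℝ)..1, x := by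
    rw [← intervalIntegral.integral_add intervalIntegrable_const intervalIntegrable_id]
  rw [this, integral_id]
  simp; norm_num

theorem wg_hdg_bilinear_forms_differ :
    (∫ y in (0:ℝ)..1, ∫ x in (0:ℝ)..1, 1 / (1 + x)) = Real.log 2 ∧
    (∀ p q : ℝ × ℝ,
      (∫ y in (0:ℝ)..1, ∫ x in (0:ℝ)..1, (1 + x) *
          ((Real.log 2 * p.1) * (Real.log 2 * q.1) + (Real.log 2 * p.2) * (Real.log 2 * q.2)))
        = 3 / 2 * Real.log 2 ^ 2 * (p.1 * q.1 + p.2 * q.2)) ∧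
    (∀ p q : ℝ × ℝ,
      (∫ y in (0:ℝ)..1, ∫ x in (0:ℝ)..1, (1 / (1 + x)) * (p.1 * q.1 + p.2 * q.2))
        = Real.log 2 * (p.1 * q.1 + p.2 * q.2)) ∧
    (3 / 2 : ℝ) * Real.log 2 ^ 2 ≠ Real.log 2 ∧
    ¬ (∀ p q : ℝ × ℝ,
      (∫ y in (0:ℝ)..1, ∫ x in (0:ℝ)..1, (1 + x) *
          ((Real.log 2 * p.1) * (Real.log 2 * q.1) + (Real.log 2 * p.2) * (Real.log 2 * q.2)))
        = ∫ y in (0:ℝ)..1, ∫ x in (0:ℝ)..1, (1 / (1 + x)) * (p.1 * q.1 + p.2 * q.2)) := by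
  have h1 : (∫ y in (0:ℝ)..1, ∫ x in (0:ℝ)..1, 1 / (1 + x)) = Real.log 2 := by
    rw [intervalIntegral.integral_const, int_inv]; simp
  have h2 : ∀ p q : ℝ × ℝ,
      (∫ y in (0:ℝ)..1, ∫ x in (0:ℝ)..1, (1 + x) *
          ((Real.log 2 * p.1) * (Real.log 2 * q.1) + (Real.log 2 * p.2) * (Real.log 2 * q.2)))
        = 3 / 2 * Real.log 2 ^ 2 * (p.1 * q.1 + p.2 * q.2) := by
    intro p q
    have hin : (∫ x in (0:ℝ)..1, (1 + x) *
        ((Real.log 2 * p.1) * (Real.log 2 * q.1) + (Real.log 2 * p.2) * (Real.log 2 * q.2)))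
        = 3 / 2 * Real.log 2 ^ 2 * (p.1 * q.1 + p.2 * q.2) := by
      rw [intervalIntegral.integral_mul_const, int_lin]; ring
    rw [intervalIntegral.integral_congr (g := fun _ => 3 / 2 * Real.log 2 ^ 2 * (p.1 * q.1 + p.2 * q.2)) (fun y _ => hin)]
    simp
  have h3 : ∀ p q : ℝ × ℝ,
      (∫ y in (0:ℝ)..1, ∫ x in (0:ℝ)..1, (1 / (1 + x)) * (p.1 * q.1 + p.2 * q.2))
        = Real.log 2 * (p.1 * q.1 + p.2 * q.2) := by
    intro p q
    have hin : (∫ x in (0:ℝ)..1, (1 / (1 + x)) * (p.1 * q.1 + p.2 * q.2))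
        = Real.log 2 * (p.1 * q.1 + p.2 * q.2) := by
      rw [intervalIntegral.integral_mul_const, int_inv]
    rw [intervalIntegral.integral_congr (g := fun _ => Real.log 2 * (p.1 * q.1 + p.2 * q.2)) (fun y _ => hin)]
    simp
  have h4 : (3 / 2 : ℝ) * Real.log 2 ^ 2 ≠ Real.log 2 := by
    intro h
    have hL := Real.log_two_gt_d9
    nlinarith [Real.log_two_lt_d9]
  refine ⟨h1, h2, h3, h4, fun h => ?_⟩
  have := h (1, 0) (1, 0)
  rw [h2 (1,0) (1,0), h3 (1,0) (1,0)] at this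
  simp at this
  exact h4 this
end
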